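/- (Lemma 4, monotone case) Let g : (k+1)^𝒳 → ℝ≥0 be a monotone normalized k-submodular function, w : 𝒳 → ℝ≥0 with w(x) > 0 for all x ∈ 𝒳, ε ∈ (0,1], τ > 0 and W > 0, and let v be a k-set with g(v) ≥ τ and w(v) ≤ W. Set θ = ετ/W and A = ((3−ε)/(2ε))·W. Assume 𝒳 contains no big element, i.e., every x ∈ 𝒳 with w(x) ≤ A satisfies max_{i∈[k]} g((x,i)) < τ. Let 𝟎 = x⁰ ⊑ x¹ ⊑ … ⊑ xᵐ = 𝐱 be a greedy chain for g in which every added pair satisfies Δ_{x_p,i_p}g(xᵖ⁻¹) ≥ θ·w(x_p), and suppose that for every y ∈ E(v) ∖ E(𝐱) there is an index p_y ∈ {0,…,m} such that either max_{i∈[k]} Δ_{y,i}g(x^{p_y}) < θ·w(y), or both max_{i∈[k]} Δ_{y,i}g(x^{p_y}) ≥ θ·w(y) and w(x^{p_y}) + w(y) > A. Then g(𝐱) ≥ (1−ε)τ/2. -/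

import Mathlib

/-- A `k`-set: an assignment of each ground element to one of `k` parts or to none
(`none` meaning the element belongs to no part).  This encodes a tuple
`(S_1, …, S_k)` of pairwise disjoint subsets of `X`. -/
abbrev KSet (X : Type*) (k : ℕ) := X → Option (Fin k)

namespace KSet

variable {X : Type*} {k : ℕ}

/-- The empty `k`-set `𝟎 = (∅, …, ∅)`. -/
def bot (X : Type*) (k : ℕ) : KSet X k := fun _ => none

/-- `le s t` is the partial order `s ⊑ t`, i.e. `Sᵢ ⊆ Tᵢ` for every `i ∈ [k]`. -/
def le (s t : KSet X k) : Prop := ∀ (x : X) (i : Fin k), s x = some i → t x = some i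

/-- The meet `s ⊓ t`, whose `i`-th component is `Sᵢ ∩ Tᵢ`. -/
def meet (s t : KSet X k) : KSet X k := fun x => if s x = t x then s x else none

/-- The join `s ⊔ t`, whose `i`-th component is `(Sᵢ ∪ Tᵢ) \ ⋃_{j ≠ i} (Sⱼ ∪ Tⱼ)`. -/
def join (s t : KSet X k) : KSet X k := fun x =>
  match s x, t x with
  | none, b => b
  | some i, none => some i
  | some i, some j => if i = j then some i else none

/-- The `k`-set `(x, i)` whose only nonempty component is `Sᵢ = {x}`. -/
def single [DecidableEq X] (x : X) (i : Fin k) : KSet X k :=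
  fun y => if y = x then some i else none

/-- `s ⊔ (x, i)`: add the element `x` to the `i`-th part of `s`
(intended for `x ∉ E(s)`). -/
def add [DecidableEq X] (s : KSet X k) (x : X) (i : Fin k) : KSet X k :=
  Function.update s x (some i)

end KSet

/-- The marginal gain `Δ_{x,i} g (s) = g (s ⊔ (x,i)) - g s`. -/
def marg {X : Type*} [DecidableEq X] {k : ℕ} (g : KSet X k → ℝ) (s : KSet X k)
    (x : X) (i : Fin k) : ℝ :=
  g (KSet.add s x i) - g s

/-- `g` is `k`-submodular: `g (s ⊓ t) + g (s ⊔ t) ≤ g s + g t` for all `k`-sets. -/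
def KSubmodular {X : Type*} {k : ℕ} (g : KSet X k → ℝ) : Prop :=
  ∀ s t : KSet X k, g (KSet.meet s t) + g (KSet.join s t) ≤ g s + g t

/-- `g` is monotone with respect to `⊑`. -/
def KMonotone {X : Type*} {k : ℕ} (g : KSet X k → ℝ) : Prop :=
  ∀ s t : KSet X k, KSet.le s t → g s ≤ g t

/-- The weight `w(s) = ∑_{x ∈ E(s)} w x` of a `k`-set. -/
def wtot {X : Type*} [Fintype X] {k : ℕ} (w : X → ℝ) (s : KSet X k) : ℝ :=
  ∑ x ∈ Finset.univ.filter (fun x => s x ≠ none), w x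

/-- A greedy chain for `g`: `c 0 = 𝟎` and each step adds one new element at a
position maximizing the marginal gain over `i ∈ [k]`. -/
def GreedyChain {X : Type*} [DecidableEq X] {k : ℕ} (g : KSet X k → ℝ) (m : ℕ)
    (c : ℕ → KSet X k) : Prop :=
  c 0 = KSet.bot X k ∧
  ∀ p, p < m → ∃ (xp : X) (ip : Fin k),
    c p xp = none ∧
    c (p + 1) = KSet.add (c p) xp ip ∧
    ∀ i : Fin k, marg g (c p) xp i ≤ marg g (c p) xp ip

/-!
If some `y ∈ E(v) \ E(𝐱)` was rejected at step `p` because `w(xᵖ) + w(y) > A`, the threshold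
condition on every greedy step gives `g(𝐱) ≥ g(xᵖ) ≥ θ·w(xᵖ) > θ·(A - W) = 3(1 - ε)τ/2`.
Otherwise, by diminishing returns, every `y ∈ E(v) \ E(𝐱)` has gain at most `θ·w(y)` at `𝐱`.
The classical analysis of the greedy algorithm for `k`-submodular functions then applies: the
`k`-sets `oᵖ`, equal to `xᵖ` on `E(xᵖ)` and to `v` elsewhere, satisfy
`g(oᵖ⁻¹) - g(oᵖ) ≤ g(xᵖ) - g(xᵖ⁻¹)` because the greedy position maximizes the gain, so
`g(v) ≤ g(oᵐ) + g(𝐱) ≤ 2g(𝐱) + θ·w(v) ≤ 2g(𝐱) + ετ`.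
-/

namespace KSet

variable {X : Type*} {k : ℕ}

theorem le.refl (s : KSet X k) : s.le s := fun _ _ h => h

theorem le.trans {s t u : KSet X k} (hst : s.le t) (htu : t.le u) : s.le u :=
  fun x i h => htu x i (hst x i h)

theorem le.apply_eq_none {s t : KSet X k} (h : s.le t) {y : X} (hy : t y = none) :
    s y = none := by
  cases hs : s y with
  | none => rfl
  | some j => simpa [hy] using h y j hs

def override (s t : KSet X k) : KSet X k := fun z => (s z).or (t z)

theorem override_bot (t : KSet X k) : (bot X k).override t = t := rfl

variable [DecidableEq X]

def erase (s : KSet X k) (x : X) : KSet X k := Function.update s x none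

theorem le_add {s : KSet X k} {x : X} (hx : s x = none) (i : Fin k) : s.le (s.add x i) := by
  intro z j hz
  have hzx : z ≠ x := by rintro rfl; simp [hx] at hz
  simpa [add, Function.update_of_ne hzx] using hz

theorem override_add (s t : KSet X k) (x : X) (i : Fin k) :
    (s.add x i).override t = (s.override t).add x i := by
  funext z
  by_cases hz : z = x
  · subst hz; simp [override, add]
  · simp [override, add, Function.update_of_ne hz]

theorem le_erase_override {s : KSet X k} (t : KSet X k) {x : X} (hx : s x = none) :
    s.le ((s.override t).erase x) := by
  intro z j hz
  have hzx : z ≠ x := by rintro rfl; simp [hx] at hz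
  simp [erase, override, Function.update_of_ne hzx, hz]

theorem erase_apply_self (s : KSet X k) (x : X) : s.erase x x = none := Function.update_self ..

theorem add_erase (s : KSet X k) (x : X) (i : Fin k) : (s.erase x).add x i = s.add x i :=
  Function.update_idem ..

theorem add_erase_of_apply_eq {s : KSet X k} {x : X} {i : Fin k} (h : s x = some i) :
    (s.erase x).add x i = s := by
  rw [add_erase, add, ← h, Function.update_eq_self]

theorem erase_of_apply_eq_none {s : KSet X k} {x : X} (h : s x = none) : s.erase x = s := by
  rw [erase, ← h, Function.update_eq_self]

theorem override_eq_piecewise [Fintype X] (s t : KSet X k) :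
    s.override t = (Finset.univ.filter fun y => t y ≠ none ∧ s y = none).piecewise t s := by
  funext z
  cases hs : s z <;> cases ht : t z <;> simp [override, Finset.piecewise, hs, ht]

end KSet

section Weight

variable {X : Type*} [Fintype X] {k : ℕ}

theorem wtot_bot (w : X → ℝ) : wtot w (KSet.bot X k) = 0 := by
  simp [wtot, KSet.bot]

theorem wtot_add [DecidableEq X] (w : X → ℝ) {s : KSet X k} {x : X} (hx : s x = none)
    (i : Fin k) : wtot w (s.add x i) = wtot w s + w x := by
  have hsupp : Finset.univ.filter (fun z => s.add x i z ≠ none)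
      = insert x (Finset.univ.filter fun z => s z ≠ none) := by
    ext z
    simp only [Finset.mem_filter, Finset.mem_insert, Finset.mem_univ, true_and]
    by_cases hz : z = x
    · subst hz; simp [KSet.add]
    · simp [KSet.add, hz]
  rw [wtot, hsupp, Finset.sum_insert (by simp [hx]), add_comm]
  rfl

end Weight

section Marginal

variable {X : Type*} [DecidableEq X] {k : ℕ} {g : KSet X k → ℝ}

theorem KMonotone.marg_nonneg (hmono : KMonotone g) {s : KSet X k} {x : X} (hx : s x = none)
    (i : Fin k) : 0 ≤ marg g s x i :=
  sub_nonneg.mpr (hmono _ _ (KSet.le_add hx i))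

theorem KSubmodular.marg_le_marg_of_le (hsub : KSubmodular g) {s t : KSet X k} (hst : s.le t)
    {y : X} (hy : t y = none) (i : Fin k) : marg g t y i ≤ marg g s y i := by
  have hsy : s y = none := hst.apply_eq_none hy
  have hmeet : KSet.meet (s.add y i) t = s := by
    funext z
    by_cases hz : z = y
    · subst hz; simp [KSet.meet, KSet.add, hy, hsy]
    · cases h : s z with
      | none => cases h' : t z <;> simp [KSet.meet, KSet.add, Function.update_of_ne hz, h, h']
      | some j => simp [KSet.meet, KSet.add, Function.update_of_ne hz, h, hst z j h]
  have hjoin : KSet.join (s.add y i) t = t.add y i := by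
    funext z
    by_cases hz : z = y
    · subst hz; simp [KSet.join, KSet.add, hy]
    · cases h : s z with
      | none => simp [KSet.join, KSet.add, Function.update_of_ne hz, h]
      | some j => simp [KSet.join, KSet.add, Function.update_of_ne hz, h, hst z j h]
  have := hsub (s.add y i) t
  rw [hmeet, hjoin] at this
  unfold marg
  linarith

theorem KSubmodular.override_add_le_of_greedy (hsub : KSubmodular g) (hmono : KMonotone g)
    {s : KSet X k} (t : KSet X k) {x : X} {i : Fin k} (hx : s x = none)
    (hmax : ∀ j, marg g s x j ≤ marg g s x i) :
    g (s.override t) + g s ≤ g ((s.add x i).override t) + g (s.add x i) := by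
  -- Passing from `s` to `s.add x i` can only overwrite the entry of `t` at `x`; via `r`, the
  -- value lost there is at most `marg g s x j ≤ marg g s x i` by diminishing returns.
  set r := (s.override t).erase x
  have hsr : s.le r := KSet.le_erase_override t hx
  have hrx : r x = none := KSet.erase_apply_self _ _
  have hdrop : g (s.override t) ≤ g r + marg g s x i := by
    cases hu : s.override t x with
    | none =>
      have hru : r = s.override t := KSet.erase_of_apply_eq_none hu
      rw [hru]
      linarith [hmono.marg_nonneg hx i]
    | some j =>
      have hmj : marg g r x j ≤ marg g s x j := hsub.marg_le_marg_of_le hsr hrx j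
      have hrj : r.add x j = s.override t := KSet.add_erase_of_apply_eq hu
      have hji := hmax j
      unfold marg at hmj hji ⊢
      rw [hrj] at hmj
      linarith
  have hrise : g r ≤ g ((s.add x i).override t) := by
    rw [KSet.override_add, ← KSet.add_erase]
    exact hmono _ _ (KSet.le_add hrx i)
  unfold marg at hdrop
  linarith

theorem KSubmodular.piecewise_le [Fintype X] (hsub : KSubmodular g) {s t : KSet X k}
    {b : X → ℝ} (T : Finset X) (hT : ∀ y ∈ T, t y ≠ none ∧ s y = none)
    (hb : ∀ y ∈ T, ∀ i, marg g s y i ≤ b y) :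
    g (T.piecewise t s) ≤ g s + ∑ y ∈ T, b y := by
  induction T using Finset.induction_on with
  | empty => simp
  | @insert a T ha ih =>
    obtain ⟨hta, hsa⟩ := hT a (Finset.mem_insert_self a T)
    obtain ⟨i, hi⟩ := Option.ne_none_iff_exists'.mp hta
    have hsT : s.le (T.piecewise t s) := by
      intro z j hz
      have hzT : z ∉ T := fun hz' => by simp [(hT z (Finset.mem_insert_of_mem hz')).2] at hz
      simpa [Finset.piecewise_eq_of_notMem _ _ _ hzT] using hz
    have haT : T.piecewise t s a = none := by rw [Finset.piecewise_eq_of_notMem _ _ _ ha, hsa]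
    have hstep : (insert a T).piecewise t s = KSet.add (T.piecewise t s) a i := by
      rw [Finset.piecewise_insert, hi]; rfl
    have hmarg := (hsub.marg_le_marg_of_le hsT haT i).trans (hb a (Finset.mem_insert_self a T) i)
    have ihT := ih (fun y hy => hT y (Finset.mem_insert_of_mem hy))
      (fun y hy => hb y (Finset.mem_insert_of_mem hy))
    rw [hstep, Finset.sum_insert ha]
    unfold marg at hmarg
    linarith

theorem KSubmodular.override_le [Fintype X] (hsub : KSubmodular g) (s t : KSet X k)
    {b : X → ℝ} (hb : ∀ y, t y ≠ none → s y = none → ∀ i, marg g s y i ≤ b y) :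
    g (s.override t) ≤ g s + ∑ y ∈ Finset.univ.filter (fun y => t y ≠ none ∧ s y = none), b y := by
  rw [KSet.override_eq_piecewise]
  refine hsub.piecewise_le _ (fun y hy => by simpa using hy) (fun y hy => ?_)
  simp only [Finset.mem_filter, Finset.mem_univ, true_and] at hy
  exact hb y hy.1 hy.2

end Marginal

namespace GreedyChain

variable {X : Type*} [DecidableEq X] {k : ℕ} {g : KSet X k → ℝ} {m : ℕ} {c : ℕ → KSet X k}

theorem le_succ (hc : GreedyChain g m c) {p : ℕ} (hp : p < m) : (c p).le (c (p + 1)) := by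
  obtain ⟨x, i, hx, hadd, -⟩ := hc.2 p hp
  rw [hadd]
  exact KSet.le_add hx i

theorem le_of_le (hc : GreedyChain g m c) {p q : ℕ} (hpq : p ≤ q) (hqm : q ≤ m) :
    (c p).le (c q) := by
  induction q, hpq using Nat.le_induction with
  | base => exact KSet.le.refl _
  | succ q _ ih => exact (ih (by omega)).trans (hc.le_succ (by omega))

theorem le_override_add (hc : GreedyChain g m c) (hsub : KSubmodular g) (hmono : KMonotone g)
    (hnorm : g (KSet.bot X k) = 0) (t : KSet X k) {p : ℕ} (hp : p ≤ m) :
    g t ≤ g ((c p).override t) + g (c p) := by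
  induction p with
  | zero => rw [hc.1, KSet.override_bot, hnorm, add_zero]
  | succ p ih =>
    obtain ⟨x, i, hx, hadd, hmax⟩ := hc.2 p (by omega)
    rw [hadd]
    exact (ih (by omega)).trans (hsub.override_add_le_of_greedy hmono t hx hmax)

theorem le_two_mul_add [Fintype X] (hc : GreedyChain g m c) (hsub : KSubmodular g)
    (hmono : KMonotone g) (hnorm : g (KSet.bot X k) = 0) (t : KSet X k) {b : X → ℝ}
    (hb0 : ∀ y, 0 ≤ b y) (hb : ∀ y, t y ≠ none → c m y = none → ∀ i, marg g (c m) y i ≤ b y) :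
    g t ≤ 2 * g (c m) + ∑ y ∈ Finset.univ.filter (fun y => t y ≠ none), b y := by
  have hsub_sum : ∑ y ∈ Finset.univ.filter (fun y => t y ≠ none ∧ c m y = none), b y
      ≤ ∑ y ∈ Finset.univ.filter (fun y => t y ≠ none), b y :=
    Finset.sum_le_sum_of_subset_of_nonneg (fun y hy => by
      simp only [Finset.mem_filter, Finset.mem_univ, true_and] at hy ⊢; exact hy.1)
      fun y _ _ => hb0 y
  linarith [hc.le_override_add hsub hmono hnorm t le_rfl, hsub.override_le (c m) t hb]

end GreedyChain

theorem mul_wtot_le_of_threshold {X : Type*} [Fintype X] [DecidableEq X] {k : ℕ}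
    {g : KSet X k → ℝ} (hnorm : g (KSet.bot X k) = 0) {w : X → ℝ} {θ : ℝ} {m : ℕ}
    {c : ℕ → KSet X k} (h0 : c 0 = KSet.bot X k)
    (hstep : ∀ p, p < m → ∃ (x : X) (i : Fin k),
      c p x = none ∧ c (p + 1) = (c p).add x i ∧ θ * w x ≤ marg g (c p) x i)
    {p : ℕ} (hp : p ≤ m) : θ * wtot w (c p) ≤ g (c p) := by
  induction p with
  | zero => rw [h0, wtot_bot, hnorm, mul_zero]
  | succ p ih =>
    obtain ⟨x, i, hx, hadd, hgain⟩ := hstep p (by omega)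
    have ihp := ih (by omega)
    rw [hadd, wtot_add w hx i]
    unfold marg at hgain
    linarith

theorem lemma4_monotone_general {X : Type*} [Fintype X] [DecidableEq X] {k : ℕ}
    (g : KSet X k → ℝ) (hsub : KSubmodular g)
    (hmono : KMonotone g) (hnorm : g (KSet.bot X k) = 0)
    (w : X → ℝ) (hw : ∀ x, 0 < w x)
    (ε τ W : ℝ) (hε0 : 0 < ε) (hε1 : ε ≤ 1) (hτ : 0 < τ) (hW : 0 < W)
    (v : KSet X k) (hgv : τ ≤ g v) (hwv : wtot w v ≤ W)
    (θ A : ℝ) (hθ : θ = ε * τ / W) (hA : A = (3 - ε) / (2 * ε) * W)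
    (m : ℕ) (c : ℕ → KSet X k) (h0 : c 0 = KSet.bot X k)
    (hchain : ∀ p, p < m → ∃ (xp : X) (ip : Fin k),
      c p xp = none ∧ c (p + 1) = KSet.add (c p) xp ip ∧
        (∀ i : Fin k, marg g (c p) xp i ≤ marg g (c p) xp ip) ∧
        θ * w xp ≤ marg g (c p) xp ip)
    (hout : ∀ y : X, v y ≠ none → c m y = none →
      ∃ p, p ≤ m ∧
        ((∀ i : Fin k, marg g (c p) y i < θ * w y) ∨
          ((∃ i : Fin k, θ * w y ≤ marg g (c p) y i) ∧ A < wtot w (c p) + w y))) :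
    (1 - ε) * τ / 2 ≤ g (c m) := by
  have hc : GreedyChain g m c :=
    ⟨h0, fun p hp => let ⟨x, i, hx, hadd, hmax, _⟩ := hchain p hp; ⟨x, i, hx, hadd, hmax⟩⟩
  have hθ0 : 0 ≤ θ := by rw [hθ]; positivity
  have hθW : θ * W = ε * τ := by rw [hθ]; field_simp
  by_cases hbad : ∃ y, v y ≠ none ∧ c m y = none ∧ ∃ p ≤ m, A < wtot w (c p) + w y
  · obtain ⟨y, hvy, -, p, hpm, hAy⟩ := hbad
    have hgp : θ * wtot w (c p) ≤ g (c m) :=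
      (mul_wtot_le_of_threshold hnorm h0
        (fun q hq => let ⟨x, i, hx, hadd, _, hgain⟩ := hchain q hq; ⟨x, i, hx, hadd, hgain⟩)
        hpm).trans (hmono _ _ (hc.le_of_le hpm le_rfl))
    have hwy : w y ≤ W :=
      (Finset.single_le_sum (fun x _ => (hw x).le) (by simpa using hvy)).trans hwv
    have hθA : θ * A = (3 - ε) * τ / 2 := by rw [hθ, hA]; field_simp
    linarith [mul_le_mul_of_nonneg_left hAy.le hθ0, mul_le_mul_of_nonneg_left hwy hθ0,
      mul_nonneg (sub_nonneg.mpr hε1) hτ.le]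
  · push Not at hbad
    have hgood : ∀ y, v y ≠ none → c m y = none → ∀ i, marg g (c m) y i ≤ θ * w y := by
      intro y hvy hcy i
      obtain ⟨p, hpm, hlow | ⟨-, hAy⟩⟩ := hout y hvy hcy
      · exact (hsub.marg_le_marg_of_le (hc.le_of_le hpm le_rfl) hcy i).trans (hlow i).le
      · exact absurd hAy (hbad y hvy hcy p hpm).not_gt
    have hle := hc.le_two_mul_add hsub hmono hnorm v (fun y => mul_nonneg hθ0 (hw y).le) hgood
    rw [← Finset.mul_sum, ← wtot] at hle
    linarith [mul_le_mul_of_nonneg_left hwv hθ0]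

/-- **Lemma 4, monotone case.** Suppose `g` is monotone
normalized `k`-submodular, `w > 0`, `ε ∈ (0,1]`, `τ > 0`, `W > 0`, `v` is a
`k`-set with `g v ≥ τ` and `w(v) ≤ W`, `θ = ετ/W`, `A = ((3-ε)/(2ε))·W`, and
the ground set contains no big element.  If `𝟎 = x⁰ ⊑ … ⊑ xᵐ = 𝐱` is a greedy
chain in which every added pair passes the threshold `Δ_{x_p,i_p}g(xᵖ⁻¹) ≥ θ·w(x_p)`,
and every `y ∈ E(v) \ E(𝐱)` has an index `p_y ≤ m` at which `y` is good or bad,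
then `g 𝐱 ≥ (1-ε)τ/2`. -/
theorem lemma4_monotone {X : Type*} [Fintype X] [DecidableEq X] {k : ℕ}
    (g : KSet X k → ℝ) (hnn : ∀ s : KSet X k, 0 ≤ g s) (hsub : KSubmodular g)
    (hmono : KMonotone g) (hnorm : g (KSet.bot X k) = 0)
    (w : X → ℝ) (hw : ∀ x, 0 < w x)
    (ε τ W : ℝ) (hε0 : 0 < ε) (hε1 : ε ≤ 1) (hτ : 0 < τ) (hW : 0 < W)
    (v : KSet X k) (hgv : τ ≤ g v) (hwv : wtot w v ≤ W)
    (θ A : ℝ) (hθ : θ = ε * τ / W) (hA : A = (3 - ε) / (2 * ε) * W)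
    (hnobig : ∀ x : X, w x ≤ A → ∀ i : Fin k, g (KSet.single x i) < τ)
    (m : ℕ) (c : ℕ → KSet X k) (h0 : c 0 = KSet.bot X k)
    (hchain : ∀ p, p < m → ∃ (xp : X) (ip : Fin k),
      c p xp = none ∧ c (p + 1) = KSet.add (c p) xp ip ∧
        (∀ i : Fin k, marg g (c p) xp i ≤ marg g (c p) xp ip) ∧
        θ * w xp ≤ marg g (c p) xp ip)
    (hout : ∀ y : X, v y ≠ none → c m y = none →
      ∃ p, p ≤ m ∧
        ((∀ i : Fin k, marg g (c p) y i < θ * w y) ∨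
          ((∃ i : Fin k, θ * w y ≤ marg g (c p) y i) ∧ A < wtot w (c p) + w y))) :
    (1 - ε) * τ / 2 ≤ g (c m) :=
  lemma4_monotone_general g hsub hmono hnorm w hw ε τ W hε0 hε1 hτ hW v hgv hwv θ A hθ hA m c h0
    hchain hout
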